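/- Let H₀, H₁, H₂ be open hemispheres of Sⁿ, defined by nonzero linear functionals ℓ₀, ℓ₁, ℓ₂, with H₁ not antipodal to H₂ (i.e. ℓ₂ is not a negative multiple of ℓ₁). If H₀ ∩ H₁ and H₀ ∩ H₂ are disjoint, then the antipodal hemisphere ι(H₀) = {x : ℓ₀(x) < 0} is contained in H₁ ∪ H₂. -/

import Mathlib

/-!
If `x ∈ ι(H₀)` lay outside `H₁ ∪ H₂`, then `ℓ₀ (-x) > 0`, `ℓ₁ (-x) ≥ 0` and `ℓ₂ (-x) ≥ 0`.
Since `ℓ₁` and `ℓ₂` are nonzero and not negatively proportional, some `y` has `ℓ₁ y > 0` and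
`ℓ₂ y > 0` (otherwise `ker ℓ₁ ≤ ker ℓ₂`, so `ℓ₂ = c • ℓ₁` with `c < 0`). For small `t > 0` all
three functionals are positive at `-x + t • y`, and normalising it gives a point of
`H₀ ∩ H₁ ∩ H₂`.
-/

/-- The open hemisphere of the unit sphere `Sⁿ ⊂ ℝ^{n+1}` defined by a linear
functional `ℓ`. -/
def hemisphere (n : ℕ) (ℓ : EuclideanSpace ℝ (Fin (n + 1)) →ₗ[ℝ] ℝ) :
    Set (EuclideanSpace ℝ (Fin (n + 1))) :=
  {x | x ∈ Metric.sphere (0 : EuclideanSpace ℝ (Fin (n + 1))) 1 ∧ ℓ x > 0}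

open Filter Topology

namespace LinearMap

variable {E : Type*} [AddCommGroup E] [Module ℝ E]

theorem exists_eq_smul_of_ker_le {f g : E →ₗ[ℝ] ℝ} (h : ker f ≤ ker g) :
    ∃ c : ℝ, g = c • f := by
  have hg := mem_span_of_iInf_ker_le_ker (L := fun _ : Unit => f) (K := g) (by simpa using h)
  rw [Set.range_const, Submodule.mem_span_singleton] at hg
  obtain ⟨c, hc⟩ := hg
  exact ⟨c, hc.symm⟩

theorem exists_pos_of_ne_zero {f : E →ₗ[ℝ] ℝ} (hf : f ≠ 0) : ∃ u, 0 < f u := by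
  obtain ⟨u, hu⟩ := DFunLike.ne_iff.1 hf
  rcases (show f u ≠ 0 from hu).lt_or_gt with hneg | hpos
  · exact ⟨-u, by simpa using hneg⟩
  · exact ⟨u, hpos⟩

theorem ker_le_ker_of_forall_pos_imp_nonpos {f g : E →ₗ[ℝ] ℝ} (hf : f ≠ 0)
    (h : ∀ y, 0 < f y → g y ≤ 0) : ker f ≤ ker g := by
  obtain ⟨u, hu⟩ := exists_pos_of_ne_zero hf
  intro v (hv : f v = 0)
  by_contra hgv
  -- `t` is chosen so that `g (u + t • v) = 1`, while `f (u + t • v) = f u > 0`.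
  set t := (1 - g u) / g v
  have hg : g (u + t • v) = 1 := by
    simp only [map_add, map_smul, smul_eq_mul, t]
    field_simp [show g v ≠ 0 from hgv]
    ring
  have hf : f (u + t • v) = f u := by simp [hv]
  linarith [h (u + t • v) (hf ▸ hu)]

theorem exists_pos_pos_of_ne_neg_smul {f g : E →ₗ[ℝ] ℝ} (hf : f ≠ 0) (hg : g ≠ 0)
    (hfg : ∀ c : ℝ, c < 0 → g ≠ c • f) : ∃ y, 0 < f y ∧ 0 < g y := by
  by_contra! h
  obtain ⟨c, rfl⟩ := exists_eq_smul_of_ker_le (ker_le_ker_of_forall_pos_imp_nonpos hf h)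
  obtain ⟨u, hu⟩ := exists_pos_of_ne_zero hf
  have hc : c ≤ 0 := nonpos_of_mul_nonpos_left (h u hu) hu
  have hc' : c ≠ 0 := by rintro rfl; exact hg (zero_smul ℝ f)
  exact hfg c (hc.lt_of_ne hc') rfl

theorem eventually_pos_add_smul (f : E →ₗ[ℝ] ℝ) {w : E} (hw : 0 < f w) (y : E) :
    ∀ᶠ t : ℝ in 𝓝 0, 0 < f (w + t • y) := by
  have hc : Continuous fun t : ℝ => f (w + t • y) := by
    simp only [map_add, map_smul, smul_eq_mul]
    fun_prop
  exact continuousAt_const.eventually_lt hc.continuousAt (by simpa using hw)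

theorem exists_pos_pos_pos {f₀ f₁ f₂ : E →ₗ[ℝ] ℝ} {w y : E} (hw₀ : 0 < f₀ w)
    (hw₁ : 0 ≤ f₁ w) (hw₂ : 0 ≤ f₂ w) (hy₁ : 0 < f₁ y) (hy₂ : 0 < f₂ y) :
    ∃ z, 0 < f₀ z ∧ 0 < f₁ z ∧ 0 < f₂ z := by
  obtain ⟨t, ht₀, ht⟩ :=
    ((eventually_pos_add_smul f₀ hw₀ y).filter_mono nhdsWithin_le_nhds).and
      (self_mem_nhdsWithin : ∀ᶠ t : ℝ in 𝓝[>] 0, 0 < t) |>.exists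
  refine ⟨w + t • y, ht₀, ?_, ?_⟩ <;> simp only [map_add, map_smul, smul_eq_mul]
  · exact add_pos_of_nonneg_of_pos hw₁ (mul_pos ht hy₁)
  · exact add_pos_of_nonneg_of_pos hw₂ (mul_pos ht hy₂)

end LinearMap

theorem inv_norm_smul_mem_hemisphere {n : ℕ} {ℓ : EuclideanSpace ℝ (Fin (n + 1)) →ₗ[ℝ] ℝ}
    {z : EuclideanSpace ℝ (Fin (n + 1))} (hz : 0 < ℓ z) : ‖z‖⁻¹ • z ∈ hemisphere n ℓ := by
  have hz₀ : z ≠ 0 := by rintro rfl; simp at hz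
  refine ⟨by simpa using norm_smul_inv_norm (𝕜 := ℝ) hz₀, ?_⟩
  rw [map_smul, smul_eq_mul]
  exact mul_pos (inv_pos.2 (norm_pos_iff.2 hz₀)) hz

theorem antipodal_subset_union_general (n : ℕ)
    (ℓ₀ ℓ₁ ℓ₂ : EuclideanSpace ℝ (Fin (n + 1)) →ₗ[ℝ] ℝ)
    (hℓ₁ : ℓ₁ ≠ 0) (hℓ₂ : ℓ₂ ≠ 0)
    (hna : ∀ c : ℝ, c < 0 → ℓ₂ ≠ c • ℓ₁)
    (hdisj : (hemisphere n ℓ₀ ∩ hemisphere n ℓ₁) ∩ (hemisphere n ℓ₀ ∩ hemisphere n ℓ₂) = ∅) :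
    {x | x ∈ Metric.sphere (0 : EuclideanSpace ℝ (Fin (n + 1))) 1 ∧ ℓ₀ x < 0}
      ⊆ hemisphere n ℓ₁ ∪ hemisphere n ℓ₂ := by
  rintro x ⟨hx, hx₀⟩
  by_contra hx'
  simp only [hemisphere, Set.mem_union, Set.mem_ofPred_eq, hx, true_and, not_or, not_lt] at hx'
  obtain ⟨y, hy₁, hy₂⟩ := LinearMap.exists_pos_pos_of_ne_neg_smul hℓ₁ hℓ₂ hna
  obtain ⟨z, hz₀, hz₁, hz₂⟩ := LinearMap.exists_pos_pos_pos (f₀ := ℓ₀) (w := -x)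
    (by simpa using hx₀) (by simpa using hx'.1) (by simpa using hx'.2) hy₁ hy₂
  rw [← Set.not_nonempty_iff_eq_empty] at hdisj
  exact hdisj ⟨‖z‖⁻¹ • z, ⟨inv_norm_smul_mem_hemisphere hz₀, inv_norm_smul_mem_hemisphere hz₁⟩,
    inv_norm_smul_mem_hemisphere hz₀, inv_norm_smul_mem_hemisphere hz₂⟩

/-- Let `H₀, H₁, H₂` be open hemispheres with `H₁` not antipodal to `H₂` (`ℓ₂` is not a
negative multiple of `ℓ₁`). If `H₀ ∩ H₁` and `H₀ ∩ H₂` are disjoint, then the antipodal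
hemisphere `ι(H₀) = {ℓ₀ < 0}` is contained in `H₁ ∪ H₂`. -/
theorem antipodal_subset_union (n : ℕ) (hn : 1 ≤ n)
    (ℓ₀ ℓ₁ ℓ₂ : EuclideanSpace ℝ (Fin (n + 1)) →ₗ[ℝ] ℝ)
    (hℓ₀ : ℓ₀ ≠ 0) (hℓ₁ : ℓ₁ ≠ 0) (hℓ₂ : ℓ₂ ≠ 0)
    (hna : ∀ c : ℝ, c < 0 → ℓ₂ ≠ c • ℓ₁)
    (hdisj : (hemisphere n ℓ₀ ∩ hemisphere n ℓ₁) ∩ (hemisphere n ℓ₀ ∩ hemisphere n ℓ₂) = ∅) :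
    {x | x ∈ Metric.sphere (0 : EuclideanSpace ℝ (Fin (n + 1))) 1 ∧ ℓ₀ x < 0}
      ⊆ hemisphere n ℓ₁ ∪ hemisphere n ℓ₂ :=
  antipodal_subset_union_general n ℓ₀ ℓ₁ ℓ₂ hℓ₁ hℓ₂ hna hdisj
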